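/- arXiv:1205.1892 — 5 statements merged into one kernel-verified Lean document; each statement's English description precedes it below -/
import Mathlib

section
/- Let (Ω, 𝒜, P) be a probability space, let M be a sub-σ-algebra of 𝒜, let X be an integrable ℝ^v-valued random variable and let X̃ be an ℝ^v-valued random variable that has the same distribution as X and is independent of M. Then for every bounded M-measurable real random variable W and every bounded Lipschitz function k : ℝ^v → ℝ one has |Cov(W, k(X))| ≤ ‖W‖_∞ · Lip(k) · E‖X − X̃‖_{l1}, where ‖x‖_{l1} = Σ_{i=1}^v |x_i| and Lip(k) denotes the Lipschitz constant of k with respect to ‖·‖_{l1}. -/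
/-!
Replacing `X` by its independent copy `Xt` does not change `E[k(X)]`, and independence turns
`E[W] E[k(Xt)]` into `E[W k(Xt)]`. Hence `Cov(W, k(X)) = E[W (k(X) - k(Xt))]`, and the integrand is
bounded pointwise by `‖W‖_∞ · Lip(k) · ‖X - Xt‖_{l¹}`.
-/

open MeasureTheory ProbabilityTheory

section

variable {Ω : Type*} [MeasurableSpace Ω] {P : Measure Ω}

theorem integral_mul_sub_integral_mul_integral_eq_of_indepFun_of_identDistrib
    {W f g : Ω → ℝ} (hW : AEStronglyMeasurable W P) (hg : AEStronglyMeasurable g P)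
    (hWf : Integrable (fun ω => W ω * f ω) P) (hWg : Integrable (fun ω => W ω * g ω) P)
    (hindep : IndepFun W g P) (hident : IdentDistrib g f P P) :
    (∫ ω, W ω * f ω ∂P) - (∫ ω, W ω ∂P) * ∫ ω, f ω ∂P = ∫ ω, W ω * (f ω - g ω) ∂P := by
  have hfactor : ∫ ω, W ω * g ω ∂P = (∫ ω, W ω ∂P) * ∫ ω, g ω ∂P :=
    hindep.integral_mul_eq_mul_integral hW hg
  simp only [mul_sub]
  rw [integral_sub hWf hWg, hfactor, hident.integral_eq]

theorem integrable_sum_abs_sub {ι : Type*} [Fintype ι] {X Y : Ω → ι → ℝ}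
    (hX : Measurable X) (hY : Measurable Y)
    (hXint : Integrable (fun ω => ∑ i, |X ω i|) P)
    (hYint : Integrable (fun ω => ∑ i, |Y ω i|) P) :
    Integrable (fun ω => ∑ i, |X ω i - Y ω i|) P := by
  refine (hXint.add hYint).mono' (by fun_prop) (Filter.Eventually.of_forall fun ω => ?_)
  rw [Real.norm_of_nonneg (Finset.sum_nonneg fun i _ => abs_nonneg _), Pi.add_apply,
    ← Finset.sum_add_distrib]
  exact Finset.sum_le_sum fun i _ => abs_sub _ _

end

theorem covariance_coupling_bound_general
    {Ω : Type*} {m mΩ : MeasurableSpace Ω} (hm : m ≤ mΩ)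
    (P : Measure Ω) [IsProbabilityMeasure P]
    (v : ℕ) (X Xt : Ω → (Fin v → ℝ))
    (hX : Measurable X) (hXt : Measurable Xt)
    (hXint : Integrable (fun ω => ∑ i, |X ω i|) P)
    (hXtint : Integrable (fun ω => ∑ i, |Xt ω i|) P)
    (hdist : Measure.map Xt P = Measure.map X P)
    (hindep : Indep (MeasurableSpace.comap Xt inferInstance) m P)
    (W : Ω → ℝ) (hWm : Measurable[m] W)
    (CW : ℝ) (hCW : ∀ ω, |W ω| ≤ CW)
    (k : (Fin v → ℝ) → ℝ) (hkmeas : Measurable k)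
    (Ck : ℝ) (hCk : ∀ x, |k x| ≤ Ck)
    (Lk : ℝ)
    (hkLip : ∀ x y, |k x - k y| ≤ Lk * ∑ i, |x i - y i|) :
    |(∫ ω, W ω * k (X ω) ∂P) - (∫ ω, W ω ∂P) * ∫ ω, k (X ω) ∂P|
      ≤ CW * Lk * ∫ ω, ∑ i, |X ω i - Xt ω i| ∂P := by
  have hW : AEStronglyMeasurable W P := (hWm.mono hm le_rfl).aestronglyMeasurable
  have hW_bound : ∀ᵐ ω ∂P, ‖W ω‖ ≤ CW := .of_forall hCW
  have hk_int {Y : Ω → Fin v → ℝ} (hY : Measurable Y) : Integrable (fun ω => k (Y ω)) P :=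
    .of_bound (hkmeas.comp hY).aestronglyMeasurable Ck (.of_forall fun ω => hCk (Y ω))
  have hindep_XtW : IndepFun Xt W P := indep_of_indep_of_le_right hindep hWm.comap_le
  have hindep_W : IndepFun W (fun ω => k (Xt ω)) P := hindep_XtW.symm.comp measurable_id hkmeas
  have hident : IdentDistrib (fun ω => k (Xt ω)) (fun ω => k (X ω)) P P :=
    (IdentDistrib.mk hXt.aemeasurable hX.aemeasurable hdist).comp hkmeas
  have hcov : (∫ ω, W ω * k (X ω) ∂P) - (∫ ω, W ω ∂P) * ∫ ω, k (X ω) ∂P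
      = ∫ ω, W ω * (k (X ω) - k (Xt ω)) ∂P :=
    integral_mul_sub_integral_mul_integral_eq_of_indepFun_of_identDistrib hW
      (hk_int hXt).aestronglyMeasurable ((hk_int hX).bdd_mul hW hW_bound)
      ((hk_int hXt).bdd_mul hW hW_bound) hindep_W hident
  rw [hcov, ← integral_const_mul, ← Real.norm_eq_abs]
  refine norm_integral_le_of_norm_le
    ((integrable_sum_abs_sub hX hXt hXint hXtint).const_mul _) (.of_forall fun ω => ?_)
  rw [Real.norm_eq_abs, abs_mul, mul_assoc]
  exact mul_le_mul (hCW ω) (hkLip _ _) (abs_nonneg _) ((abs_nonneg _).trans (hCW ω))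

/-- Covariance inequality for τ-weakly dependent random variables (coupling form):
if `Xt` is a copy of `X` independent of the sub-σ-algebra `m`, then for every bounded
`m`-measurable `W` and every bounded Lipschitz function `k` (w.r.t. the `l¹`-norm),
`|Cov(W, k ∘ X)| ≤ ‖W‖_∞ · Lip(k) · E‖X − Xt‖_{l¹}`. -/
theorem covariance_coupling_bound
    {Ω : Type*} {m mΩ : MeasurableSpace Ω} (hm : m ≤ mΩ)
    (P : Measure Ω) [IsProbabilityMeasure P]
    (v : ℕ) (X Xt : Ω → (Fin v → ℝ))
    (hX : Measurable X) (hXt : Measurable Xt)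
    (hXint : Integrable (fun ω => ∑ i, |X ω i|) P)
    (hXtint : Integrable (fun ω => ∑ i, |Xt ω i|) P)
    (hdist : Measure.map Xt P = Measure.map X P)
    (hindep : Indep (MeasurableSpace.comap Xt inferInstance) m P)
    (W : Ω → ℝ) (hWm : Measurable[m] W)
    (CW : ℝ) (hCW : ∀ ω, |W ω| ≤ CW)
    (k : (Fin v → ℝ) → ℝ) (hkmeas : Measurable k)
    (Ck : ℝ) (hCk : ∀ x, |k x| ≤ Ck)
    (Lk : ℝ) (hLk : 0 ≤ Lk)
    (hkLip : ∀ x y, |k x - k y| ≤ Lk * ∑ i, |x i - y i|) :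
    |(∫ ω, W ω * k (X ω) ∂P) - (∫ ω, W ω ∂P) * ∫ ω, k (X ω) ∂P|
      ≤ CW * Lk * ∫ ω, ∑ i, |X ω i - Xt ω i| ∂P :=
  covariance_coupling_bound_general hm P v X Xt hX hXt hXint hXtint hdist hindep W hWm CW hCW k
    hkmeas Ck hCk Lk hkLip
end

section
/- Weak law of large numbers for triangular arrays of weakly dependent random variables: Let (X_{n,k})_{k=1}^n, n ∈ ℕ, be a triangular array of row-wise (strictly) stationary, integrable ℝ^d-valued random variables on a probability space (Ω, 𝒜, P) such that lim_{K→∞} sup_{n∈ℕ} P(‖X_{n,1}‖_{l1} > K) = 0. Assume there are nonnegative coefficients (τ̄_r)_{r∈ℕ} with τ̄_r → 0 as r → ∞ such that for every n and all 1 ≤ j < k ≤ n there exists a random variable X̃_{n,k} with the same distribution as X_{n,k}, independent of X_{n,j}, satisfying E‖X_{n,k} − X̃_{n,k}‖_{l1} ≤ τ̄_{k−j}. Let g^{(n)} : ℝ^d → ℝ be measurable functions with E g^{(n)}(X_{n,1}) = 0 for all n, which are uniformly Lipschitz continuous on every bounded set (i.e., for every K > 0 there is L(K) < ∞ such that each g^{(n)}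 restricted to [−K, K]^d is L(K)-Lipschitz) and such that the sequence (g^{(n)}(X_{n,1}))_{n∈ℕ} is uniformly integrable. Then n^{-1} Σ_{k=1}^n g^{(n)}(X_{n,k}) converges to 0 in probability as n → ∞. -/
/-!
Truncate: replace `g⁽ⁿ⁾` by `bₙ = clip_M ∘ g⁽ⁿ⁾ ∘ clip_K` (the inner clip acting coordinatewise).
Uniform integrability and tightness make `E|g⁽ⁿ⁾(X_{n,1}) - bₙ(X_{n,1})|` small uniformly in `n`,
and by stationarity the same holds at every `k`, so the remainder is small in `L¹`.
The truncated function is bounded by `M` and globally `L(K)`-Lipschitz for the `ℓ¹` norm, so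
the coupling gives `Cov(bₙ(X_{n,j}), bₙ(X_{n,k})) ≤ 2M · L(K) · τ̄_{k-j}`. Hence the second moment
of the average of the centred truncated variables is `O(n⁻¹ ∑_{r<n} τ̄_r)`, which tends to `0`
by Cesàro. Chebyshev for the truncated part and Markov for the remainder conclude.
-/

open MeasureTheory ProbabilityTheory Filter Finset

def clip (c t : ℝ) : ℝ := max (-c) (min c t)

lemma abs_clip_le {c : ℝ} (hc : 0 ≤ c) (t : ℝ) : |clip c t| ≤ c :=
  abs_le.2 ⟨le_max_left _ _, max_le (by linarith) (min_le_left _ _)⟩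

lemma clip_of_abs_le {c t : ℝ} (h : |t| ≤ c) : clip c t = t := by
  rw [abs_le] at h
  rw [clip, min_eq_right h.2, max_eq_right h.1]

lemma abs_clip_sub_clip_le (c s t : ℝ) : |clip c s - clip c t| ≤ |s - t| :=
  calc |clip c s - clip c t| ≤ |min c s - min c t| := by
        simpa [clip] using abs_max_sub_max_le_max (-c) (min c s) (-c) (min c t)
    _ ≤ |s - t| := by simpa using abs_min_sub_min_le_max c s c t

lemma abs_sub_clip_le {c : ℝ} (hc : 0 ≤ c) (t : ℝ) : |t - clip c t| ≤ |t| := by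
  unfold clip
  grind [abs_le]

lemma measurable_clip (c : ℝ) : Measurable (clip c) :=
  measurable_const.max (measurable_const.min measurable_id)

section Truncation

variable {ι : Type*}

def truncate (M K : ℝ) (g : (ι → ℝ) → ℝ) (x : ι → ℝ) : ℝ :=
  clip M (g fun i => clip K (x i))

lemma measurable_truncate (M K : ℝ) {g : (ι → ℝ) → ℝ} (hg : Measurable g) :
    Measurable (truncate M K g) :=
  (measurable_clip M).comp <| hg.comp <|
    measurable_pi_lambda _ fun i => (measurable_clip K).comp (measurable_pi_apply i)

lemma abs_truncate_le {M : ℝ} (hM : 0 ≤ M) (K : ℝ) (g : (ι → ℝ) → ℝ) (x : ι → ℝ) :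
    |truncate M K g x| ≤ M :=
  abs_clip_le hM _

lemma truncate_of_sum_abs_le [Fintype ι] (M : ℝ) {K : ℝ} (g : (ι → ℝ) → ℝ) {x : ι → ℝ}
    (hx : ∑ i, |x i| ≤ K) : truncate M K g x = clip M (g x) := by
  rw [truncate]
  congr 2 with i
  exact clip_of_abs_le ((single_le_sum (fun j _ => abs_nonneg (x j)) (mem_univ i)).trans hx)

lemma abs_truncate_sub_truncate_le [Fintype ι] (M : ℝ) {K L : ℝ} (hK : 0 ≤ K) (hL : 0 ≤ L)
    {g : (ι → ℝ) → ℝ}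
    (hg : ∀ x y, (∀ i, |x i| ≤ K) → (∀ i, |y i| ≤ K) → |g x - g y| ≤ L * ∑ i, |x i - y i|)
    (x y : ι → ℝ) : |truncate M K g x - truncate M K g y| ≤ L * ∑ i, |x i - y i| :=
  calc |truncate M K g x - truncate M K g y|
      ≤ |g (fun i => clip K (x i)) - g (fun i => clip K (y i))| := abs_clip_sub_clip_le ..
    _ ≤ L * ∑ i, |clip K (x i) - clip K (y i)| :=
        hg _ _ (fun i => abs_clip_le hK _) (fun i => abs_clip_le hK _)
    _ ≤ L * ∑ i, |x i - y i| := by gcongr L * ∑ i, ?_ with i; exact abs_clip_sub_clip_le ..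

variable {Ω : Type*} [MeasurableSpace Ω] {μ : Measure Ω}

lemma integral_abs_sub_truncate_le [Fintype ι] [IsFiniteMeasure μ] {X : Ω → ι → ℝ}
    (hX : Measurable X) {g : (ι → ℝ) → ℝ} (hg : Measurable g) (hgX : Integrable (fun ω => g (X ω)) μ)
    {M₀ M K₀ K : ℝ} (hM : 0 ≤ M) (hM₀ : M₀ ≤ M) (hK₀ : K₀ ≤ K) :
    ∫ ω, |g (X ω) - truncate M K g (X ω)| ∂μ ≤
      ∫ ω in {ω | M₀ < |g (X ω)|}, |g (X ω)| ∂μ + 2 * M * μ.real {ω | K₀ < ∑ i, |X ω i|} := by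
  set A := {ω | M₀ < |g (X ω)|}
  set B := {ω | K₀ < ∑ i, |X ω i|}
  have hA : MeasurableSet A := measurableSet_lt measurable_const (hg.comp hX).abs
  have hB : MeasurableSet B := measurableSet_lt measurable_const <|
    Finset.measurable_sum _ fun i _ => ((measurable_pi_apply i).comp hX).abs
  have hclip : ∀ ω, |g (X ω) - clip M (g (X ω))| ≤ A.indicator (fun ω => |g (X ω)|) ω := by
    intro ω
    by_cases hω : ω ∈ A
    · simpa [Set.indicator_of_mem hω] using abs_sub_clip_le hM (g (X ω))
    · have : |g (X ω)| ≤ M := (not_lt.1 hω).trans hM₀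
      simp [Set.indicator_of_notMem hω, clip_of_abs_le this]
  have hbox : ∀ ω, |clip M (g (X ω)) - truncate M K g (X ω)| ≤ B.indicator (fun _ => 2 * M) ω := by
    intro ω
    by_cases hω : ω ∈ B
    · rw [Set.indicator_of_mem hω, two_mul]
      exact (abs_sub _ _).trans (add_le_add (abs_clip_le hM _) (abs_truncate_le hM _ _ _))
    · have : ∑ i, |X ω i| ≤ K := (not_lt.1 hω).trans hK₀
      simp [Set.indicator_of_notMem hω, truncate_of_sum_abs_le M g this]
  have hint : Integrable (fun ω => g (X ω) - truncate M K g (X ω)) μ :=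
    hgX.sub (Integrable.of_bound
      ((measurable_truncate M K hg).comp hX).aestronglyMeasurable M
      (ae_of_all _ fun ω => abs_truncate_le hM K g (X ω)))
  calc ∫ ω, |g (X ω) - truncate M K g (X ω)| ∂μ
      ≤ ∫ ω, (A.indicator (fun ω => |g (X ω)|) ω + B.indicator (fun _ => 2 * M) ω) ∂μ :=
        integral_mono hint.abs ((hgX.abs.indicator hA).add ((integrable_const _).indicator hB))
          fun ω => (abs_sub_le _ _ _).trans (add_le_add (hclip ω) (hbox ω))
    _ = _ := by
        rw [integral_add (hgX.abs.indicator hA) ((integrable_const _).indicator hB),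
          integral_indicator hA, integral_indicator_const _ hB, smul_eq_mul, mul_comm]

end Truncation

lemma sum_comp_le_sum_range {ρ : ℕ → ℝ} (hρ : ∀ r, 0 ≤ ρ r) {s : Finset ℕ} {f : ℕ → ℕ}
    {n : ℕ} (hf : Set.InjOn f s) (hfs : ∀ k ∈ s, f k < n) :
    ∑ k ∈ s, ρ (f k) ≤ ∑ r ∈ range n, ρ r := by
  rw [← sum_image hf]
  exact sum_le_sum_of_subset_of_nonneg (fun r hr => by
    obtain ⟨k, hk, rfl⟩ := mem_image.1 hr; exact mem_range.2 (hfs k hk)) fun r _ _ => hρ r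

lemma sum_Icc_dist_le {ρ : ℕ → ℝ} (hρ : ∀ r, 0 ≤ ρ r) {n j : ℕ} (hj : j ∈ Icc 1 n) :
    ∑ k ∈ Icc 1 n, ρ (Nat.dist j k) ≤ 2 * ∑ r ∈ range n, ρ r := by
  rw [mem_Icc] at hj
  rw [← sum_filter_add_sum_filter_not _ (· ≤ j), two_mul]
  gcongr
  · rw [sum_congr rfl fun k hk => by rw [Nat.dist_comm, Nat.dist_eq_sub_of_le (mem_filter.1 hk).2]]
    refine sum_comp_le_sum_range hρ (fun a ha b hb hab => ?_) fun k hk => ?_ <;>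
      simp only [coe_filter, mem_filter, mem_Icc, Set.mem_ofPred_eq] at * <;> omega
  · rw [sum_congr rfl fun k hk => by
      rw [Nat.dist_eq_sub_of_le (not_le.1 (mem_filter.1 hk).2).le]]
    refine sum_comp_le_sum_range hρ (fun a ha b hb hab => ?_) fun k hk => ?_ <;>
      simp only [coe_filter, mem_filter, mem_Icc, Set.mem_ofPred_eq] at * <;> omega

section Probability

variable {Ω : Type*} [MeasurableSpace Ω] {μ : Measure Ω}

lemma measureReal_abs_ge_le_integral_abs_div {f : Ω → ℝ} (hf : Integrable f μ) {t : ℝ}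
    (ht : 0 < t) : μ.real {ω | t ≤ |f ω|} ≤ (∫ ω, |f ω| ∂μ) / t := by
  rw [le_div_iff₀ ht, mul_comm]
  exact mul_meas_ge_le_integral_of_nonneg (ae_of_all _ fun ω => abs_nonneg _) hf.abs t

lemma measureReal_abs_ge_le_integral_sq_div [IsFiniteMeasure μ] {f : Ω → ℝ}
    (hf : Integrable (fun ω => f ω ^ 2) μ) {t : ℝ} (ht : 0 < t) :
    μ.real {ω | t ≤ |f ω|} ≤ (∫ ω, f ω ^ 2 ∂μ) / t ^ 2 := by
  calc μ.real {ω | t ≤ |f ω|} ≤ μ.real {ω | t ^ 2 ≤ |f ω ^ 2|} :=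
        measureReal_mono fun ω (hω : t ≤ |f ω|) => by
          rw [Set.mem_ofPred_eq, abs_pow]; gcongr
    _ ≤ (∫ ω, |f ω ^ 2| ∂μ) / t ^ 2 := measureReal_abs_ge_le_integral_abs_div hf (by positivity)
    _ = (∫ ω, f ω ^ 2 ∂μ) / t ^ 2 := by simp_rw [abs_pow, sq_abs]

lemma measureReal_abs_add_gt_le [IsFiniteMeasure μ] {U V : Ω → ℝ}
    (hU : Integrable (fun ω => U ω ^ 2) μ) (hV : Integrable V μ) {ε : ℝ} (hε : 0 < ε) :
    μ.real {ω | ε < |U ω + V ω|} ≤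
      (∫ ω, U ω ^ 2 ∂μ) / (ε / 2) ^ 2 + (∫ ω, |V ω| ∂μ) / (ε / 2) := by
  have hsub : {ω | ε < |U ω + V ω|} ⊆ {ω | ε / 2 ≤ |U ω|} ∪ {ω | ε / 2 ≤ |V ω|} := by
    intro ω hω
    by_contra h
    simp only [Set.mem_union, Set.mem_ofPred_eq, not_or, not_le] at h hω
    linarith [abs_add_le (U ω) (V ω)]
  calc μ.real {ω | ε < |U ω + V ω|}
      ≤ μ.real {ω | ε / 2 ≤ |U ω|} + μ.real {ω | ε / 2 ≤ |V ω|} :=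
        (measureReal_mono hsub).trans (measureReal_union_le _ _)
    _ ≤ _ := add_le_add (measureReal_abs_ge_le_integral_sq_div hU (by positivity))
        (measureReal_abs_ge_le_integral_abs_div hV (by positivity))

lemma tendsto_measure_abs_gt_of_forall_approx [IsFiniteMeasure μ] {Z : ℕ → Ω → ℝ}
    (h : ∀ η > 0, ∃ U V : ℕ → Ω → ℝ, (∀ n, Z n = U n + V n) ∧
      (∀ n, Integrable (fun ω => U n ω ^ 2) μ) ∧ (∀ n, Integrable (V n) μ) ∧
      Tendsto (fun n => ∫ ω, U n ω ^ 2 ∂μ) atTop (nhds 0) ∧ ∀ n, ∫ ω, |V n ω| ∂μ ≤ η)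
    {ε : ℝ} (hε : 0 < ε) : Tendsto (fun n => μ {ω | ε < |Z n ω|}) atTop (nhds 0) := by
  rw [← ENNReal.tendsto_toReal_iff (fun _ => measure_ne_top _ _) ENNReal.zero_ne_top,
    ENNReal.toReal_zero]
  refine tendsto_order.2 ⟨fun a ha => .of_forall fun n => ha.trans_le ENNReal.toReal_nonneg,
    fun a ha => ?_⟩
  obtain ⟨U, V, hZ, hU, hV, hU0, hVη⟩ := h (a * ε / 8) (by positivity)
  have hsmall : ∀ᶠ n in atTop, (∫ ω, U n ω ^ 2 ∂μ) / (ε / 2) ^ 2 < a / 2 :=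
    (hU0.div_const _).eventually (gt_mem_nhds (by simpa using half_pos ha))
  filter_upwards [hsmall] with n hn
  calc μ.real {ω | ε < |Z n ω|} ≤ _ := by
        simpa [hZ n] using measureReal_abs_add_gt_le (hU n) (hV n) hε
    _ ≤ (∫ ω, U n ω ^ 2 ∂μ) / (ε / 2) ^ 2 + (a * ε / 8) / (ε / 2) := by gcongr; exact hVη n
    _ < a := by
        have : (a * ε / 8) / (ε / 2) = a / 4 := by field_simp; ring
        linarith

lemma integral_abs_avg_le {s : Finset ℕ} {F : ℕ → Ω → ℝ} (hF : ∀ k ∈ s, Integrable (F k) μ)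
    {a : ℝ} (ha : 0 ≤ a) (hFa : ∀ k ∈ s, ∫ ω, |F k ω| ∂μ ≤ a) :
    ∫ ω, |(#s : ℝ)⁻¹ * ∑ k ∈ s, F k ω| ∂μ ≤ a := by
  have hsum : Integrable (fun ω => ∑ k ∈ s, |F k ω|) μ :=
    integrable_finsetSum _ fun k hk => (hF k hk).abs
  calc ∫ ω, |(#s : ℝ)⁻¹ * ∑ k ∈ s, F k ω| ∂μ ≤ ∫ ω, (#s : ℝ)⁻¹ * ∑ k ∈ s, |F k ω| ∂μ := by
        refine integral_mono_of_nonneg (ae_of_all _ fun ω => abs_nonneg _) (hsum.const_mul _)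
          (ae_of_all _ fun ω => ?_)
        simp only [abs_mul, abs_inv, Nat.abs_cast]
        gcongr
        exact abs_sum_le_sum_abs _ _
    _ = (#s : ℝ)⁻¹ * ∑ k ∈ s, ∫ ω, |F k ω| ∂μ := by
        rw [integral_const_mul, integral_finsetSum _ fun k hk => (hF k hk).abs]
    _ ≤ (#s : ℝ)⁻¹ * (#s * a) := by
        gcongr
        simpa using sum_le_sum hFa
    _ ≤ a := by
        rcases s.eq_empty_or_nonempty with rfl | hs
        · simpa using ha
        · rw [inv_mul_cancel_left₀ (by simpa using hs.ne_empty)]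

lemma integral_sq_avg_le {Y : ℕ → Ω → ℝ} {ρ : ℕ → ℝ} (hρ : ∀ r, 0 ≤ ρ r) {n : ℕ}
    (hY : ∀ j ∈ Icc 1 n, ∀ k ∈ Icc 1 n, Integrable (fun ω => Y j ω * Y k ω) μ)
    (hcov : ∀ j ∈ Icc 1 n, ∀ k ∈ Icc 1 n, ∫ ω, Y j ω * Y k ω ∂μ ≤ ρ (Nat.dist j k)) :
    ∫ ω, ((n : ℝ)⁻¹ * ∑ k ∈ Icc 1 n, Y k ω) ^ 2 ∂μ ≤ 2 * ((n : ℝ)⁻¹ * ∑ r ∈ range n, ρ r) := by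
  have hsq : ∀ ω, ((n : ℝ)⁻¹ * ∑ k ∈ Icc 1 n, Y k ω) ^ 2 =
      (n : ℝ)⁻¹ ^ 2 * ∑ j ∈ Icc 1 n, ∑ k ∈ Icc 1 n, Y j ω * Y k ω := fun ω => by
    rw [mul_pow, sq (∑ k ∈ Icc 1 n, Y k ω), sum_mul_sum]
  simp_rw [hsq]
  rw [integral_const_mul, integral_finsetSum _ fun j hj => integrable_finsetSum _ (hY j hj)]
  calc (n : ℝ)⁻¹ ^ 2 * ∑ j ∈ Icc 1 n, ∫ ω, ∑ k ∈ Icc 1 n, Y j ω * Y k ω ∂μ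
      = (n : ℝ)⁻¹ ^ 2 * ∑ j ∈ Icc 1 n, ∑ k ∈ Icc 1 n, ∫ ω, Y j ω * Y k ω ∂μ := by
        congr 1; exact sum_congr rfl fun j hj => integral_finsetSum _ (hY j hj)
    _ ≤ (n : ℝ)⁻¹ ^ 2 * ∑ j ∈ Icc 1 n, 2 * ∑ r ∈ range n, ρ r := by
        gcongr with j hj
        exact (sum_le_sum (hcov j hj)).trans (sum_Icc_dist_le hρ hj)
    _ = 2 * ((n : ℝ)⁻¹ * ∑ r ∈ range n, ρ r) := by
        rw [sum_const, Nat.card_Icc, nsmul_eq_mul]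
        rcases Nat.eq_zero_or_pos n with rfl | hn
        · simp
        · field_simp; push_cast; ring

lemma identDistrib_of_stationary {β : Type*} [MeasurableSpace β] {Y : ℕ → Ω → β}
    (hY : ∀ k, Measurable (Y k)) {n : ℕ}
    (hstat : ∀ m (k : Fin m → ℕ) (l : ℕ), (∀ i, 1 ≤ k i) → (∀ i, k i + l ≤ n) →
      Measure.map (fun ω i => Y (k i + l) ω) μ = Measure.map (fun ω i => Y (k i) ω) μ)
    : ∀ k ∈ Icc 1 n, IdentDistrib (Y k) (Y 1) μ μ := by
  intro k hk
  rw [mem_Icc] at hk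
  have h := hstat 1 (fun _ => 1) (k - 1) (fun _ => le_rfl) fun _ => by omega
  rw [show 1 + (k - 1) = k by omega] at h
  have hvec : IdentDistrib (fun ω (_ : Fin 1) => Y k ω) (fun ω _ => Y 1 ω) μ μ :=
    ⟨(measurable_pi_lambda _ fun _ => hY k).aemeasurable,
      (measurable_pi_lambda _ fun _ => hY 1).aemeasurable, h⟩
  exact hvec.comp (measurable_pi_apply 0)

lemma integral_mul_le_of_indepFun {U V V' : Ω → ℝ} {A : ℝ} (hU : AEStronglyMeasurable U μ)
    (hUA : ∀ ω, |U ω| ≤ A) (hU0 : ∫ ω, U ω ∂μ = 0) (hV : Integrable V μ) (hV' : Integrable V' μ)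
    (hind : IndepFun U V' μ) :
    ∫ ω, U ω * V ω ∂μ ≤ A * ∫ ω, |V ω - V' ω| ∂μ := by
  have hbdd : ∀ᵐ ω ∂μ, ‖U ω‖ ≤ A := ae_of_all _ hUA
  have hVV' : Integrable (fun ω => V ω - V' ω) μ := hV.sub hV'
  have hUV' : ∫ ω, U ω * V' ω ∂μ = 0 := by
    simpa [hU0] using hind.integral_mul_eq_mul_integral hU hV'.aestronglyMeasurable
  calc ∫ ω, U ω * V ω ∂μ = ∫ ω, (U ω * (V ω - V' ω) + U ω * V' ω) ∂μ := by
        congr with ω; ring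
    _ = ∫ ω, U ω * (V ω - V' ω) ∂μ := by
        rw [integral_add (hVV'.bdd_mul hU hbdd) (hV'.bdd_mul hU hbdd), hUV', add_zero]
    _ ≤ ∫ ω, A * |V ω - V' ω| ∂μ :=
        integral_mono (hVV'.bdd_mul hU hbdd) (hVV'.abs.const_mul A) fun ω =>
          (le_abs_self _).trans <| by rw [abs_mul]; gcongr; exact hUA ω
    _ = A * ∫ ω, |V ω - V' ω| ∂μ := integral_const_mul _ _

lemma integral_centered_mul_le_of_indepFun [IsProbabilityMeasure μ] {ι : Type*} [Fintype ι]
    {b : (ι → ℝ) → ℝ} (hb : Measurable b) {M L : ℝ} (hbM : ∀ x, |b x| ≤ M)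
    (hbL : ∀ x y, |b x - b y| ≤ L * ∑ i, |x i - y i|) {X Y Y' : Ω → ι → ℝ}
    (hX : Measurable X) (hY : Measurable Y) (hY' : Measurable Y') (hind : IndepFun X Y' μ)
    (hdist : Integrable (fun ω => ∑ i, |Y ω i - Y' ω i|) μ) {c : ℝ}
    (hc : ∫ ω, b (X ω) ∂μ = c) :
    ∫ ω, (b (X ω) - c) * (b (Y ω) - c) ∂μ ≤ 2 * M * (L * ∫ ω, ∑ i, |Y ω i - Y' ω i| ∂μ) := by
  have hint : ∀ {Z : Ω → ι → ℝ}, Measurable Z → Integrable (fun ω => b (Z ω)) μ := fun hZ =>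
    .of_bound (hb.comp hZ).aestronglyMeasurable M (ae_of_all _ fun ω => by simpa using hbM _)
  have hcM : |c| ≤ M := by
    simpa [← hc] using norm_integral_le_of_norm_le_const (μ := μ) (f := fun ω => b (X ω))
      (ae_of_all _ fun ω => by simpa using hbM (X ω))
  calc ∫ ω, (b (X ω) - c) * (b (Y ω) - c) ∂μ
      ≤ 2 * M * ∫ ω, |(b (Y ω) - c) - (b (Y' ω) - c)| ∂μ := by
        refine integral_mul_le_of_indepFun ((hb.comp hX).sub measurable_const).aestronglyMeasurable
          (fun ω => ?_) ?_ ((hint hY).sub (integrable_const c))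
          ((hint hY').sub (integrable_const c))
          (hind.comp (hb.sub measurable_const) (hb.sub measurable_const))
        · linarith [abs_sub (b (X ω)) c, hbM (X ω)]
        · rw [integral_sub (hint hX) (integrable_const c), hc, integral_const]; simp
    _ ≤ 2 * M * (L * ∫ ω, ∑ i, |Y ω i - Y' ω i| ∂μ) := by
        simp only [sub_sub_sub_cancel_right]
        gcongr
        · linarith [(abs_nonneg _).trans (hbM 0)]
        · rw [← integral_const_mul]
          exact integral_mono ((hint hY).sub (hint hY')).abs (hdist.const_mul L)
            fun ω => hbL (Y ω) (Y' ω)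

end Probability

def covBound (M L : ℝ) (τ : ℕ → ℝ) (r : ℕ) : ℝ :=
  if r = 0 then (2 * M) ^ 2 else 2 * M * (L * τ r)

lemma covBound_nonneg {M L : ℝ} (hM : 0 ≤ M) (hL : 0 ≤ L) {τ : ℕ → ℝ} (hτ : ∀ r, 0 ≤ τ r)
    (r : ℕ) : 0 ≤ covBound M L τ r := by
  unfold covBound
  split_ifs
  · positivity
  · have := hτ r; positivity

lemma tendsto_covBound (M L : ℝ) {τ : ℕ → ℝ} (hτ : Tendsto τ atTop (nhds 0)) :
    Tendsto (covBound M L τ) atTop (nhds 0) := by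
  have h := (hτ.const_mul L).const_mul (2 * M)
  rw [mul_zero, mul_zero] at h
  exact h.congr' <| eventually_atTop.2 ⟨1, fun r hr => (if_neg (by omega)).symm⟩

section TriangularRow

variable {Ω : Type*} [MeasurableSpace Ω] {μ : Measure Ω} [IsProbabilityMeasure μ]
  {ι : Type*} [Fintype ι]

lemma integral_abs_avg_sub_centered_le {E : Type*} [MeasurableSpace E] {X : ℕ → Ω → E}
    {n : ℕ} (hident : ∀ k ∈ Icc 1 n, IdentDistrib (X k) (X 1) μ μ) {g b : E → ℝ}
    (hg : Measurable g) (hb : Measurable b) (hgX : Integrable (fun ω => g (X 1 ω)) μ)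
    (hbX : Integrable (fun ω => b (X 1 ω)) μ) (hg0 : ∫ ω, g (X 1 ω) ∂μ = 0) :
    ∫ ω, |(n : ℝ)⁻¹ * ∑ k ∈ Icc 1 n, (g (X k ω) - (b (X k ω) - ∫ ω', b (X 1 ω') ∂μ))| ∂μ ≤
      2 * ∫ ω, |g (X 1 ω) - b (X 1 ω)| ∂μ := by
  set c := ∫ ω, b (X 1 ω) ∂μ
  set e := ∫ ω, |g (X 1 ω) - b (X 1 ω)| ∂μ
  have hce : |c| ≤ e :=
    calc |c| = |∫ ω, (b (X 1 ω) - g (X 1 ω)) ∂μ| := by rw [integral_sub hbX hgX, hg0, sub_zero]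
      _ ≤ ∫ ω, |b (X 1 ω) - g (X 1 ω)| ∂μ := abs_integral_le_integral_abs
      _ = e := by simp_rw [abs_sub_comm]; rfl
  have hint : ∀ {f : E → ℝ}, Measurable f → Integrable (fun ω => f (X 1 ω)) μ →
      ∀ k ∈ Icc 1 n, Integrable (fun ω => f (X k ω)) μ :=
    fun hf h1 k hk => ((hident k hk).comp hf).symm.integrable_snd h1
  have hcard : ((#(Icc 1 n) : ℕ) : ℝ) = n := by simp
  rw [← hcard]
  refine integral_abs_avg_le (fun k hk => (hint hg hgX k hk).sub ((hint hb hbX k hk).sub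
    (integrable_const c))) (by linarith [(abs_nonneg c).trans hce]) fun k hk => ?_
  have hgbk : Integrable (fun ω => g (X k ω) - b (X k ω)) μ :=
    hint (f := fun x => g x - b x) (hg.sub hb) (hgX.sub hbX) k hk
  have hdiff : ∫ ω, |g (X k ω) - b (X k ω)| ∂μ = e :=
    ((hident k hk).comp (hg.sub hb).abs).integral_eq
  calc ∫ ω, |g (X k ω) - (b (X k ω) - c)| ∂μ ≤ ∫ ω, (|g (X k ω) - b (X k ω)| + |c|) ∂μ :=
        integral_mono_of_nonneg (ae_of_all _ fun ω => abs_nonneg _)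
          (hgbk.abs.add (integrable_const _)) <| ae_of_all _ fun ω => by
            simpa only [sub_sub_eq_add_sub, add_sub_right_comm] using abs_add_le _ _
    _ = e + |c| := by
        rw [integral_add hgbk.abs (integrable_const _), integral_const, probReal_univ, one_smul,
          hdiff]
    _ ≤ 2 * e := by linarith

lemma integral_centered_mul_le_covBound {X : ℕ → Ω → ι → ℝ} (hX : ∀ k, Measurable (X k))
    {n : ℕ} (hident : ∀ k ∈ Icc 1 n, IdentDistrib (X k) (X 1) μ μ)
    (hXint : ∀ k, 1 ≤ k → k ≤ n → Integrable (fun ω => ∑ i, |X k ω i|) μ) {τ : ℕ → ℝ}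
    (hcoupling : ∀ j k, 1 ≤ j → j < k → k ≤ n → ∃ Xt : Ω → ι → ℝ, Measurable Xt ∧
      Measure.map Xt μ = Measure.map (X k) μ ∧ IndepFun (X j) Xt μ ∧
      ∫ ω, ∑ i, |X k ω i - Xt ω i| ∂μ ≤ τ (k - j))
    {b : (ι → ℝ) → ℝ} (hb : Measurable b) {M L : ℝ} (hbM : ∀ x, |b x| ≤ M) (hL : 0 ≤ L)
    (hbL : ∀ x y, |b x - b y| ≤ L * ∑ i, |x i - y i|) :
    ∀ j ∈ Icc 1 n, ∀ k ∈ Icc 1 n,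
      ∫ ω, (b (X j ω) - ∫ ω', b (X 1 ω') ∂μ) * (b (X k ω) - ∫ ω', b (X 1 ω') ∂μ) ∂μ ≤
        covBound M L τ (Nat.dist j k) := by
  set c := ∫ ω', b (X 1 ω') ∂μ
  intro j hj k hk
  wlog hjk : j ≤ k generalizing j k
  · simpa only [mul_comm, Nat.dist_comm] using this k hk j hj (le_of_not_ge hjk)
  have hM : 0 ≤ M := (abs_nonneg _).trans (hbM 0)
  have hc : ∫ ω, b (X j ω) ∂μ = c := ((hident j hj).comp hb).integral_eq
  rcases hjk.eq_or_lt with rfl | hjk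
  · have hcM : |c| ≤ M := by
      simpa [← hc] using norm_integral_le_of_norm_le_const (μ := μ) (f := fun ω => b (X j ω))
        (ae_of_all _ fun ω => by simpa using hbM (X j ω))
    rw [Nat.dist_self, covBound, if_pos rfl]
    refine (integral_mono_of_nonneg (ae_of_all _ fun ω => mul_self_nonneg _)
      (integrable_const ((2 * M) ^ 2)) (ae_of_all _ fun ω => ?_)).trans (by simp)
    have := abs_le.1 ((abs_sub _ _).trans (add_le_add (hbM (X j ω)) hcM))
    nlinarith
  · rw [mem_Icc] at hj hk
    obtain ⟨Xt, hXt, hmap, hind, hτ⟩ := hcoupling j k hj.1 hjk hk.2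
    have hXk := hXint k hk.1 hk.2
    have hXtk : IdentDistrib Xt (X k) μ μ := ⟨hXt.aemeasurable, (hX k).aemeasurable, hmap⟩
    have hnorm : Measurable fun x : ι → ℝ => ∑ i, |x i| :=
      Finset.measurable_sum _ fun i _ => (measurable_pi_apply i).abs
    have hdist : Integrable (fun ω => ∑ i, |X k ω i - Xt ω i|) μ := by
      refine (hXk.add ((hXtk.comp hnorm).symm.integrable_snd hXk)).mono'
        (Finset.measurable_sum _ fun i _ => (((measurable_pi_apply i).comp (hX k)).sub
          ((measurable_pi_apply i).comp hXt)).abs).aestronglyMeasurable (ae_of_all _ fun ω => ?_)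
      rw [Real.norm_of_nonneg (sum_nonneg fun i _ => abs_nonneg _), Pi.add_apply,
        Function.comp_apply, ← sum_add_distrib]
      exact sum_le_sum fun i _ => abs_sub _ _
    rw [Nat.dist_eq_sub_of_le hjk.le, covBound, if_neg (by omega)]
    calc _ ≤ 2 * M * (L * ∫ ω, ∑ i, |X k ω i - Xt ω i| ∂μ) :=
          integral_centered_mul_le_of_indepFun hb hbM hbL (hX j) (hX k) hXt hind hdist hc
      _ ≤ 2 * M * (L * τ (k - j)) := by gcongr

lemma integral_sq_avg_centered_le {X : ℕ → Ω → ι → ℝ} (hX : ∀ k, Measurable (X k))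
    {n : ℕ} (hident : ∀ k ∈ Icc 1 n, IdentDistrib (X k) (X 1) μ μ)
    (hXint : ∀ k, 1 ≤ k → k ≤ n → Integrable (fun ω => ∑ i, |X k ω i|) μ) {τ : ℕ → ℝ}
    (hτ0 : ∀ r, 0 ≤ τ r)
    (hcoupling : ∀ j k, 1 ≤ j → j < k → k ≤ n → ∃ Xt : Ω → ι → ℝ, Measurable Xt ∧
      Measure.map Xt μ = Measure.map (X k) μ ∧ IndepFun (X j) Xt μ ∧
      ∫ ω, ∑ i, |X k ω i - Xt ω i| ∂μ ≤ τ (k - j))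
    {b : (ι → ℝ) → ℝ} (hb : Measurable b) {M L : ℝ} (hbM : ∀ x, |b x| ≤ M) (hL : 0 ≤ L)
    (hbL : ∀ x y, |b x - b y| ≤ L * ∑ i, |x i - y i|) :
    ∫ ω, ((n : ℝ)⁻¹ * ∑ k ∈ Icc 1 n, (b (X k ω) - ∫ ω', b (X 1 ω') ∂μ)) ^ 2 ∂μ ≤
      2 * ((n : ℝ)⁻¹ * ∑ r ∈ range n, covBound M L τ r) := by
  have hM : 0 ≤ M := (abs_nonneg _).trans (hbM 0)
  have hLp : ∀ k, MemLp (fun ω => b (X k ω) - ∫ ω', b (X 1 ω') ∂μ) 2 μ := fun k =>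
    (MemLp.of_bound (hb.comp (hX k)).aestronglyMeasurable M
      (ae_of_all _ fun ω => by simpa using hbM _)).sub (memLp_const _)
  exact integral_sq_avg_le (covBound_nonneg hM hL hτ0)
    (fun j _ k _ => (hLp j).integrable_mul (hLp k))
    (integral_centered_mul_le_covBound hX hident hXint hcoupling hb hbM hL hbL)

end TriangularRow

/-- Weak law of large numbers for triangular arrays of row-wise stationary, τ-weakly
dependent `ℝ^d`-valued random variables: if the array is uniformly tight, admits an
`L¹`-coupling with coefficients `τ̄_r → 0`, and the centered functions `g^{(n)}` are
uniformly Lipschitz on bounded sets with `(g^{(n)}(X_{n,1}))_n` uniformly integrable,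
then `n⁻¹ ∑_{k=1}^n g^{(n)}(X_{n,k}) → 0` in probability. -/
theorem wlln_triangular_tau_dependent
    {Ω : Type*} [MeasureSpace Ω] [IsProbabilityMeasure (ℙ : Measure Ω)]
    (d : ℕ) (X : ℕ → ℕ → Ω → (Fin d → ℝ))
    (hXmeas : ∀ n k, Measurable (X n k))
    (hXint : ∀ n k, 1 ≤ k → k ≤ n → Integrable (fun ω => ∑ i, |X n k ω i|) ℙ)
    -- row-wise strict stationarity
    (hstat : ∀ n m (k : Fin m → ℕ) (l : ℕ), (∀ i, 1 ≤ k i) → (∀ i, k i + l ≤ n) →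
      Measure.map (fun ω i => X n (k i + l) ω) ℙ = Measure.map (fun ω i => X n (k i) ω) ℙ)
    -- uniform tightness: lim_{K→∞} sup_n P(‖X_{n,1}‖_{l1} > K) = 0
    (htight : ∀ ε > (0 : ℝ), ∃ K : ℝ, ∀ n : ℕ,
      (ℙ {ω | K < ∑ i, |X n 1 ω i|}).toReal ≤ ε)
    -- τ-dependence coupling coefficients
    (τ : ℕ → ℝ) (hτ0 : ∀ r, 0 ≤ τ r) (hτ : Tendsto τ atTop (nhds 0))
    (hcoupling : ∀ n j k, 1 ≤ j → j < k → k ≤ n →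
      ∃ Xt : Ω → (Fin d → ℝ), Measurable Xt ∧
        Measure.map Xt ℙ = Measure.map (X n k) ℙ ∧
        IndepFun (X n j) Xt ℙ ∧
        ∫ ω, ∑ i, |X n k ω i - Xt ω i| ∂ℙ ≤ τ (k - j))
    -- centered functions, uniformly Lipschitz on bounded sets, uniformly integrable
    (g : ℕ → (Fin d → ℝ) → ℝ) (hgmeas : ∀ n, Measurable (g n))
    (hgint : ∀ n, Integrable (fun ω => g n (X n 1 ω)) ℙ)
    (hgcent : ∀ n, ∫ ω, g n (X n 1 ω) ∂ℙ = 0)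
    (hgLip : ∀ K > (0 : ℝ), ∃ L : ℝ, ∀ n (x y : Fin d → ℝ),
      (∀ i, |x i| ≤ K) → (∀ i, |y i| ≤ K) → |g n x - g n y| ≤ L * ∑ i, |x i - y i|)
    (hgui : ∀ ε > (0 : ℝ), ∃ M : ℝ, ∀ n,
      ∫ ω in {ω | M < |g n (X n 1 ω)|}, |g n (X n 1 ω)| ∂ℙ ≤ ε) :
    ∀ ε > (0 : ℝ), Tendsto
      (fun n : ℕ => ℙ {ω | ε < |(n : ℝ)⁻¹ * ∑ k ∈ Finset.Icc 1 n, g n (X n k ω)|})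
      atTop (nhds 0) := by
  have hident n := identDistrib_of_stationary (hXmeas n) (hstat n)
  intro ε hε
  refine tendsto_measure_abs_gt_of_forall_approx (fun η hη => ?_) hε
  obtain ⟨M₀, hM₀⟩ := hgui (η / 4) (by positivity)
  set M := max M₀ 1
  obtain ⟨K₀, hK₀⟩ := htight (η / (8 * M)) (by positivity)
  set K := max K₀ 1
  obtain ⟨L₀, hL₀⟩ := hgLip K (by positivity)
  set L := max L₀ 0
  have hM : 0 < M := by positivity
  have hbM : ∀ n x, |truncate M K (g n) x| ≤ M := fun n => abs_truncate_le hM.le K (g n)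
  have hbL : ∀ n x y, |truncate M K (g n) x - truncate M K (g n) y| ≤ L * ∑ i, |x i - y i| :=
    fun n => abs_truncate_sub_truncate_le M (by positivity) (le_max_right _ _)
      fun x y hx hy => (hL₀ n x y hx hy).trans (by gcongr; exact le_max_left _ _)
  set Y : ℕ → ℕ → Ω → ℝ := fun n k ω =>
    truncate M K (g n) (X n k ω) - ∫ ω', truncate M K (g n) (X n 1 ω') ∂ℙ
  have hbLp : ∀ n k, MemLp (fun ω => truncate M K (g n) (X n k ω)) 2 ℙ := fun n k =>
    MemLp.of_bound ((measurable_truncate M K (hgmeas n)).comp (hXmeas n k)).aestronglyMeasurable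
      M (ae_of_all _ fun ω => by simpa using hbM n _)
  have hYLp : ∀ n k, MemLp (Y n k) 2 ℙ := fun n k => (hbLp n k).sub (memLp_const _)
  refine ⟨fun n ω => (n : ℝ)⁻¹ * ∑ k ∈ Icc 1 n, Y n k ω,
    fun n ω => (n : ℝ)⁻¹ * ∑ k ∈ Icc 1 n, (g n (X n k ω) - Y n k ω),
    fun n => ?_, fun n => ?_, fun n => ?_, ?_, fun n => ?_⟩
  · ext ω
    rw [Pi.add_apply, ← mul_add, ← sum_add_distrib]
    simp only [add_sub_cancel]
  · exact ((memLp_finsetSum _ fun k _ => hYLp n k).const_mul _).integrable_sq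
  · exact (integrable_finsetSum _ fun k hk => (((hident n k hk).comp (hgmeas n)).symm.integrable_snd
      (hgint n)).sub ((hYLp n k).integrable one_le_two)).const_mul _
  · exact squeeze_zero (fun n => integral_nonneg fun ω => sq_nonneg _)
      (fun n => integral_sq_avg_centered_le (hXmeas n) (hident n) (hXint n) hτ0 (hcoupling n)
        (measurable_truncate M K (hgmeas n)) (hbM n) (le_max_right _ _) (hbL n))
      (by simpa using ((tendsto_covBound M L hτ).cesaro.const_mul 2))
  · calc _ ≤ 2 * ∫ ω, |g n (X n 1 ω) - truncate M K (g n) (X n 1 ω)| ∂ℙ :=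
          integral_abs_avg_sub_centered_le (hident n) (hgmeas n)
            (measurable_truncate M K (hgmeas n)) (hgint n) ((hbLp n 1).integrable one_le_two) (hgcent n)
      _ ≤ 2 * (η / 4 + 2 * M * (η / (8 * M))) := by
          gcongr
          refine (integral_abs_sub_truncate_le (hXmeas n 1) (hgmeas n) (hgint n) hM.le
            (le_max_left _ _) (le_max_left _ _)).trans ?_
          gcongr
          exacts [hM₀ n, hK₀ n]
      _ = η := by field_simp [hM.ne']; ring
end

section
/- Localization of uniform wavelet approximation: Let φ : ℝ → ℝ be a Lipschitz continuous, compactly supported function with ∫_ℝ φ(x) dx = 1, and for J ∈ ℕ, k ∈ ℤ^d set Φ_{J,k}(x) = 2^{Jd/2} Π_{i=1}^d φ(2^J x_i − k_i). Assume that for every continuous compactly supported function g̃ : ℝ^d → ℝ one has sup_{x∈ℝ^d} |g̃(x) − Σ_{k∈ℤ^d} (∫ g̃ Φ_{J,k}) Φ_{J,k}(x)| → 0 as J → ∞. Let g : ℝ^d → ℝ be a bounded measurable function that is continuous on the open cube (−c, c)^d for some c > 0, and define g_J(x) = Σ_{k∈ℤ^d} α_{J,k} Φ_{J,k}(x) with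 α_{J,k} = ∫_{ℝ^d} g(u) Φ_{J,k}(u) du. Then for every b ∈ (0, c) and every K ∈ ℕ there exists J(K, b, c) ∈ ℕ such that max_{x∈[−b,b]^d} |g(x) − g_J(x)| ≤ 1/K for all J ≥ J(K, b, c). -/
open MeasureTheory

/-- Localization of uniform wavelet approximation: if the wavelet projections converge
uniformly for every continuous compactly supported function, and `g` is bounded,
measurable and continuous on `(−c, c)^d`, then for every `b ∈ (0, c)` and `K ∈ ℕ` there
is `J(K,b,c)` with `max_{x∈[−b,b]^d} |g(x) − g_J(x)| ≤ 1/K` for all `J ≥ J(K,b,c)`. -/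
theorem wavelet_localized_uniform_approximation
    (d : ℕ) (φ : ℝ → ℝ) (Lφ : NNReal) (hφLip : LipschitzWith Lφ φ)
    (hφsupp : HasCompactSupport φ)
    (hφint : ∫ x : ℝ, φ x = 1)
    (Φ : ℕ → (Fin d → ℤ) → (Fin d → ℝ) → ℝ)
    (hΦ : ∀ (J : ℕ) k x, Φ J k x =
      (2 : ℝ) ^ (((J : ℝ) * d) / 2) * ∏ i, φ ((2 : ℝ) ^ J * x i - k i))
    -- uniform convergence of the wavelet projections of continuous compactly
    -- supported functions
    (happrox : ∀ gt : (Fin d → ℝ) → ℝ, Continuous gt → HasCompactSupport gt →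
      ∀ ε > (0 : ℝ), ∃ J0 : ℕ, ∀ J ≥ J0, ∀ x : Fin d → ℝ,
        |gt x - ∑' k : Fin d → ℤ, (∫ u : Fin d → ℝ, gt u * Φ J k u) * Φ J k x| ≤ ε)
    (g : (Fin d → ℝ) → ℝ) (hgmeas : Measurable g)
    (Cg : ℝ) (hgbdd : ∀ x, |g x| ≤ Cg)
    (c : ℝ) (hc : 0 < c)
    (hgcont : ContinuousOn g {x : Fin d → ℝ | ∀ i, |x i| < c})
    (α : ℕ → (Fin d → ℤ) → ℝ)
    (hα : ∀ J k, α J k = ∫ u : Fin d → ℝ, g u * Φ J k u)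
    (gJ : ℕ → (Fin d → ℝ) → ℝ)
    (hgJ : ∀ J x, gJ J x = ∑' k : Fin d → ℤ, α J k * Φ J k x) :
    ∀ b : ℝ, 0 < b → b < c → ∀ K : ℕ, 0 < K →
      ∃ J0 : ℕ, ∀ J ≥ J0, ∀ x : Fin d → ℝ, (∀ i, |x i| ≤ b) →
        |g x - gJ J x| ≤ 1 / K := by
  intro b hb hbc K hK
  classical
  -- radius of the support of φ
  obtain ⟨R0, hR0sub⟩ := hφsupp.isBounded.subset_closedBall 0
  set R := max R0 0 with hRdef
  have hR0 : (0:ℝ) ≤ R := le_max_right _ _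
  have hR : ∀ y : ℝ, φ y ≠ 0 → |y| ≤ R := by
    intro y hy
    have h1 : y ∈ Metric.closedBall (0:ℝ) R0 := hR0sub (subset_tsupport φ hy)
    rw [Metric.mem_closedBall, Real.dist_eq, sub_zero] at h1
    exact le_max_of_le_left h1
  set b' := (b + c) / 2 with hb'def
  have hbb' : b < b' := by rw [hb'def]; linarith
  have hb'c : b' < c := by rw [hb'def]; linarith
  have hb'0 : (0:ℝ) < b' := by rw [hb'def]; linarith
  -- clamping map onto the cube [-b', b']^d
  set π : (Fin d → ℝ) → Fin d → ℝ := fun x i => max (-b') (min b' (x i)) with hπdef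
  have hπmem : ∀ x i, |π x i| ≤ b' := by
    intro x i
    rw [abs_le]
    exact ⟨le_max_left _ _, max_le (by linarith) (min_le_left _ _)⟩
  have hπeq : ∀ x : Fin d → ℝ, (∀ i, |x i| ≤ b') → π x = x := by
    intro x hx; funext i
    have h := abs_le.mp (hx i)
    simp only [hπdef]
    rw [min_eq_right h.2, max_eq_right (by linarith [h.1])]
  have hπcont : Continuous π :=
    continuous_pi fun i => continuous_const.max (continuous_const.min (continuous_apply i))
  -- cutoff
  set χ : (Fin d → ℝ) → ℝ := fun x => max 0 (min 1 (1 + b' - ‖x‖)) with hχdef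
  have hχcont : Continuous χ :=
    continuous_const.max (continuous_const.min (continuous_const.sub continuous_norm))
  have hχ1 : ∀ x : Fin d → ℝ, (∀ i, |x i| ≤ b') → χ x = 1 := by
    intro x hx
    have hxn : ‖x‖ ≤ b' := by
      refine (pi_norm_le_iff_of_nonneg hb'0.le).mpr fun i => ?_
      simpa [Real.norm_eq_abs] using hx i
    simp only [hχdef]
    rw [min_eq_left (by linarith), max_eq_right zero_le_one]
  -- continuous compactly supported modification of g
  set gt : (Fin d → ℝ) → ℝ := fun x => g (π x) * χ x with hgtdef
  have hgteq : ∀ x : Fin d → ℝ, (∀ i, |x i| ≤ b') → gt x = g x := by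
    intro x hx; simp only [hgtdef]; rw [hπeq x hx, hχ1 x hx, mul_one]
  have hgtcont : Continuous gt := by
    have h1 : Continuous (g ∘ π) :=
      hgcont.comp_continuous hπcont (fun x i => lt_of_le_of_lt (hπmem x i) hb'c)
    exact h1.mul hχcont
  have hgtsupp : HasCompactSupport gt := by
    apply HasCompactSupport.intro (isCompact_closedBall (0 : Fin d → ℝ) (1 + b'))
    intro x hx
    have hxn : 1 + b' < ‖x‖ := by
      simpa [Metric.mem_closedBall, dist_zero_right, not_le] using hx
    have hn : (0:ℝ) ≤ ‖x‖ := norm_nonneg _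
    simp only [hgtdef, hχdef]
    rw [min_eq_right (by linarith), max_eq_left (by linarith), mul_zero]
  obtain ⟨J0, hJ0⟩ := happrox gt hgtcont hgtsupp (1 / K)
    (by have hK' : (0:ℝ) < K := by exact_mod_cast hK
        exact one_div_pos.mpr hK')
  obtain ⟨J1, hJ1⟩ := pow_unbounded_of_one_lt (2 * R / (b' - b)) (one_lt_two : (1:ℝ) < 2)
  refine ⟨max J0 J1, fun J hJ x hx => ?_⟩
  have hJ0' : J ≥ J0 := le_trans (le_max_left _ _) hJ
  have hJ1' : J ≥ J1 := le_trans (le_max_right _ _) hJ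
  have h2J : (0:ℝ) < 2 ^ J := by positivity
  have hgap : 2 * R < 2 ^ J * (b' - b) := by
    have h1 : (2:ℝ) ^ J1 ≤ 2 ^ J := pow_le_pow_right₀ one_le_two hJ1'
    have h2 : 2 * R / (b' - b) < 2 ^ J := lt_of_lt_of_le hJ1 h1
    have := (div_lt_iff₀ (by linarith : (0:ℝ) < b' - b)).mp h2
    linarith
  have hfac : ∀ (k : Fin d → ℤ) (y : Fin d → ℝ), Φ J k y ≠ 0 →
      ∀ i, |(2:ℝ) ^ J * y i - k i| ≤ R := by
    intro k y hy i
    have hprod : ∏ i, φ ((2:ℝ) ^ J * y i - k i) ≠ 0 := by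
      intro h; exact hy (by rw [hΦ, h, mul_zero])
    exact hR _ (Finset.prod_ne_zero_iff.mp hprod i (Finset.mem_univ i))
  have hterm : ∀ k : Fin d → ℤ,
      α J k * Φ J k x = (∫ u : Fin d → ℝ, gt u * Φ J k u) * Φ J k x := by
    intro k
    by_cases hz : Φ J k x = 0
    · rw [hz, mul_zero, mul_zero]
    · congr 1
      rw [hα]
      have hfun : (fun u : Fin d → ℝ => g u * Φ J k u) = fun u => gt u * Φ J k u := by
        funext u
        by_cases hu : Φ J k u = 0
        · rw [hu, mul_zero, mul_zero]
        · have hgu : gt u = g u := by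
            refine hgteq u fun i => ?_
            have h1 := hfac k x hz i
            have h2 := hfac k u hu i
            have hAB : (2:ℝ) ^ J * |u i - x i| ≤ 2 * R := by
              have e : (2:ℝ) ^ J * |u i - x i|
                  = |((2:ℝ) ^ J * u i - k i) - ((2:ℝ) ^ J * x i - k i)| := by
                rw [show ((2:ℝ) ^ J * u i - (k i : ℝ)) - ((2:ℝ) ^ J * x i - k i)
                      = (2:ℝ) ^ J * (u i - x i) from by ring, abs_mul, abs_of_pos h2J]
              rw [e]
              calc |((2:ℝ) ^ J * u i - k i) - ((2:ℝ) ^ J * x i - k i)|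
                  ≤ |(2:ℝ) ^ J * u i - k i| + |(2:ℝ) ^ J * x i - k i| := abs_sub _ _
                _ ≤ R + R := add_le_add h2 h1
                _ = 2 * R := by ring
            have h5 : |u i - x i| < b' - b :=
              lt_of_mul_lt_mul_left (lt_of_le_of_lt hAB hgap) h2J.le
            have h6 := abs_sub_abs_le_abs_sub (u i) (x i)
            have hxb := hx i
            linarith
          rw [hgu]
      rw [hfun]
  have hsum : gJ J x = ∑' k : Fin d → ℤ, (∫ u : Fin d → ℝ, gt u * Φ J k u) * Φ J k x := by
    rw [hgJ]; exact tsum_congr hterm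
  rw [hsum, ← hgteq x (fun i => le_trans (hx i) hbb'.le)]
  exact hJ0 J hJ0' x
end

section
/- Let Y be a standard normal real random variable, let λ > 0, and let W be a real random variable independent of Y. Then for all x ∈ ℝ and ε ≥ 0, P(|λY² + W − x| ≤ ε) ≤ P(Y² ≤ 2ε/λ). -/
/-!
By independence it suffices to bound, for each fixed value `w` of `W`, the Gaussian mass of
`{y | |λy² + w - x| ≤ ε}`, which lies in a set `{y | c ≤ y² ≤ c + δ}` with `δ = 2ε/λ`. For `c > 0`
that set is the pair of intervals `±[√c, √(c + δ)]`, each of length at most `√δ`. The Gaussian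
density is even and decreasing on `[0, ∞)`, so sliding each interval towards `0` can only increase
its mass; the two slid intervals fill `[-√δ, √δ] = {y | y² ≤ δ}`.
-/

open MeasureTheory ProbabilityTheory Set
open scoped ENNReal NNReal

lemma Real.sqrt_add_le_sqrt_add_sqrt {x y : ℝ} (hx : 0 ≤ x) (hy : 0 ≤ y) : √(x + y) ≤ √x + √y := by
  rw [Real.sqrt_le_left (by positivity)]
  nlinarith [Real.sq_sqrt hx, Real.sq_sqrt hy, Real.sqrt_nonneg x, Real.sqrt_nonneg y]

lemma setOf_sq_mem_Icc_subset (c δ : ℝ) :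
    {y : ℝ | c ≤ y ^ 2 ∧ y ^ 2 ≤ c + δ} ⊆ Icc (-√(c + δ)) (-√c) ∪ Icc (√c) (√(c + δ)) := by
  rintro y ⟨hlow, hup⟩
  have hlow' : √c ≤ |y| := Real.sqrt_sq_eq_abs y ▸ Real.sqrt_le_sqrt hlow
  obtain ⟨hb₁, hb₂⟩ := abs_le.1 (Real.abs_le_sqrt hup)
  rcases le_abs'.1 hlow' with hneg | hpos
  · exact Or.inl ⟨hb₁, hneg⟩
  · exact Or.inr ⟨hpos, hb₂⟩

section SymmetricUnimodal

variable {f : ℝ → ℝ≥0∞}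

lemma withDensity_Icc_le_Icc_zero (hf_anti : AntitoneOn f (Ici 0)) {a : ℝ} (ha : 0 ≤ a) (b : ℝ) :
    volume.withDensity f (Icc a b) ≤ volume.withDensity f (Icc 0 (b - a)) := by
  have hshift : ∫⁻ y in Icc 0 (b - a), f (y + a) = ∫⁻ y in Icc a b, f y := by
    simpa using (measurePreserving_add_right volume a).setLIntegral_comp_preimage_emb
      (measurableEmbedding_addRight a) f (Icc a b)
  rw [withDensity_apply _ measurableSet_Icc, withDensity_apply _ measurableSet_Icc, ← hshift]
  exact setLIntegral_mono' measurableSet_Icc fun y hy =>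
    hf_anti hy.1 (mem_Ici.2 (add_nonneg hy.1 ha)) (le_add_of_nonneg_right ha)

lemma withDensity_neg_Icc (hf_even : Function.Even f) (a b : ℝ) :
    volume.withDensity f (Icc (-b) (-a)) = volume.withDensity f (Icc a b) := by
  have hneg := (Measure.measurePreserving_neg (volume : Measure ℝ)).setLIntegral_comp_preimage_emb
    (MeasurableEquiv.neg ℝ).measurableEmbedding f (Icc a b)
  simp only [hf_even _, neg_preimage, neg_Icc] at hneg
  rw [withDensity_apply _ measurableSet_Icc, withDensity_apply _ measurableSet_Icc, hneg]

lemma withDensity_Icc_neg_self (hf_even : Function.Even f) {d : ℝ} (hd : 0 ≤ d) :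
    volume.withDensity f (Icc (-d) d) = 2 * volume.withDensity f (Icc 0 d) := by
  have hdisj : Disjoint (Icc (-d) 0) (Ioc 0 d) :=
    disjoint_left.2 fun y hy₁ hy₂ => hy₂.1.not_ge hy₁.2
  rw [← Icc_union_Ioc_eq_Icc (neg_nonpos.2 hd) hd, measure_union hdisj measurableSet_Ioc,
    measure_congr Ioc_ae_eq_Icc, two_mul]
  congr 1
  simpa using withDensity_neg_Icc hf_even 0 d

lemma withDensity_sq_mem_Icc_le (hf_even : Function.Even f) (hf_anti : AntitoneOn f (Ici 0))
    (c : ℝ) {δ : ℝ} (hδ : 0 ≤ δ) :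
    volume.withDensity f {y | c ≤ y ^ 2 ∧ y ^ 2 ≤ c + δ} ≤
      volume.withDensity f {y | y ^ 2 ≤ δ} := by
  rcases le_or_gt c 0 with hc | hc
  · exact measure_mono fun y hy => hy.2.trans (by linarith)
  set μ := volume.withDensity f
  have hwidth : √(c + δ) - √c ≤ √δ := by
    linarith [Real.sqrt_add_le_sqrt_add_sqrt hc.le hδ]
  have hright : μ (Icc (√c) (√(c + δ))) ≤ μ (Icc 0 √δ) :=
    (withDensity_Icc_le_Icc_zero hf_anti (Real.sqrt_nonneg c) _).trans
      (measure_mono (Icc_subset_Icc_right hwidth))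
  calc μ {y | c ≤ y ^ 2 ∧ y ^ 2 ≤ c + δ}
      ≤ μ (Icc (-√(c + δ)) (-√c) ∪ Icc (√c) (√(c + δ))) :=
        measure_mono (setOf_sq_mem_Icc_subset c δ)
    _ ≤ μ (Icc (-√(c + δ)) (-√c)) + μ (Icc (√c) (√(c + δ))) := measure_union_le _ _
    _ = 2 * μ (Icc (√c) (√(c + δ))) := by rw [withDensity_neg_Icc hf_even, two_mul]
    _ ≤ 2 * μ (Icc 0 √δ) := by gcongr
    _ = μ (Icc (-√δ) √δ) := (withDensity_Icc_neg_self hf_even (Real.sqrt_nonneg δ)).symm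
    _ = μ {y | y ^ 2 ≤ δ} := by
      congr 1
      ext y
      exact (Real.sq_le hδ).symm

end SymmetricUnimodal

lemma gaussianPDF_zero_even (v : ℝ≥0) : Function.Even (gaussianPDF 0 v) := fun y => by
  simp [gaussianPDF, gaussianPDFReal]

lemma gaussianPDF_zero_antitoneOn (v : ℝ≥0) : AntitoneOn (gaussianPDF 0 v) (Ici 0) := by
  intro u hu w _ huw
  unfold gaussianPDF gaussianPDFReal
  gcongr
  simpa using hu

lemma gaussianReal_sq_mem_Icc_le (v : ℝ≥0) (c : ℝ) {δ : ℝ} (hδ : 0 ≤ δ) :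
    gaussianReal 0 v {y | c ≤ y ^ 2 ∧ y ^ 2 ≤ c + δ} ≤ gaussianReal 0 v {y | y ^ 2 ≤ δ} := by
  by_cases hv : v = 0
  · rw [hv, gaussianReal_zero_var]
    exact prob_le_one.trans_eq (Measure.dirac_apply_of_mem (by simpa using hδ)).symm
  rw [gaussianReal_of_var_ne_zero 0 hv]
  exact withDensity_sq_mem_Icc_le (gaussianPDF_zero_even v) (gaussianPDF_zero_antitoneOn v) c hδ

lemma ProbabilityTheory.IndepFun.measure_preimage_le_of_forall_slice_le
    {Ω α β : Type*} [MeasurableSpace Ω] [MeasurableSpace α] [MeasurableSpace β]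
    {μ : Measure Ω} [IsProbabilityMeasure μ] {W : Ω → α} {Y : Ω → β}
    (hW : AEMeasurable W μ) (hY : AEMeasurable Y μ) (h : IndepFun W Y μ)
    {S : Set (α × β)} (hS : MeasurableSet S) {p : ℝ≥0∞}
    (hp : ∀ w, μ.map Y (Prod.mk w ⁻¹' S) ≤ p) :
    μ ((fun ω => (W ω, Y ω)) ⁻¹' S) ≤ p := by
  have := Measure.isProbabilityMeasure_map hW
  rw [← Measure.map_apply₀ (hW.prodMk hY) hS.nullMeasurableSet,
    (indepFun_iff_map_prod_eq_prod_map_map hW hY).1 h, Measure.prod_apply hS]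
  calc ∫⁻ w, μ.map Y (Prod.mk w ⁻¹' S) ∂μ.map W ≤ ∫⁻ _, p ∂μ.map W := lintegral_mono hp
    _ = p := by simp

lemma setOf_abs_mul_sq_add_sub_le_subset {lam : ℝ} (hlam : 0 < lam) (w x ε : ℝ) :
    {y : ℝ | |lam * y ^ 2 + w - x| ≤ ε} ⊆
      {y | (x - w - ε) / lam ≤ y ^ 2 ∧ y ^ 2 ≤ (x - w - ε) / lam + 2 * ε / lam} := by
  intro y (hy : |lam * y ^ 2 + w - x| ≤ ε)
  obtain ⟨hlow, hup⟩ := abs_le.1 hy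
  constructor
  · rw [div_le_iff₀ hlam]
    linarith
  · rw [← add_div, le_div_iff₀ hlam]
    linarith

/-- Concentration bound for a shifted scaled chi-square variable: if `Y` is standard
normal, `λ > 0` and `W` is independent of `Y`, then for all `x ∈ ℝ` and `ε ≥ 0`,
`P(|λY² + W − x| ≤ ε) ≤ P(Y² ≤ 2ε/λ)`. -/
theorem scaled_chisq_plus_indep_concentration
    {Ω : Type*} [MeasureSpace Ω] [IsProbabilityMeasure (ℙ : Measure Ω)]
    (Y : Ω → ℝ) (hYmeas : Measurable Y)
    (hYdist : Measure.map Y ℙ = gaussianReal 0 1)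
    (lam : ℝ) (hlam : 0 < lam)
    (W : Ω → ℝ) (hWmeas : Measurable W)
    (hindep : ProbabilityTheory.IndepFun W Y ℙ)
    (x ε : ℝ) (hε : 0 ≤ ε) :
    ℙ {ω | |lam * (Y ω) ^ 2 + W ω - x| ≤ ε} ≤ ℙ {ω | (Y ω) ^ 2 ≤ 2 * ε / lam} := by
  have hS : MeasurableSet {p : ℝ × ℝ | |lam * p.2 ^ 2 + p.1 - x| ≤ ε} :=
    measurableSet_le (by fun_prop) measurable_const
  have hslice : ∀ w, Measure.map Y ℙ (Prod.mk w ⁻¹' {p : ℝ × ℝ | |lam * p.2 ^ 2 + p.1 - x| ≤ ε}) ≤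
      gaussianReal 0 1 {y | y ^ 2 ≤ 2 * ε / lam} := fun w => by
    rw [hYdist]
    exact (measure_mono (setOf_abs_mul_sq_add_sub_le_subset hlam w x ε)).trans
      (gaussianReal_sq_mem_Icc_le 1 _ (by positivity))
  calc ℙ {ω | |lam * (Y ω) ^ 2 + W ω - x| ≤ ε}
      ≤ gaussianReal 0 1 {y | y ^ 2 ≤ 2 * ε / lam} :=
        hindep.measure_preimage_le_of_forall_slice_le hWmeas.aemeasurable hYmeas.aemeasurable hS
          hslice
    _ = ℙ {ω | (Y ω) ^ 2 ≤ 2 * ε / lam} := by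
      rw [← hYdist, Measure.map_apply hYmeas (measurableSet_le (by fun_prop) measurable_const)]
      rfl
end

section
/- Continuity of the distribution function of Gaussian quadratic forms: Let M ∈ ℕ, let Y = (Y_1, …, Y_M)' be a vector of independent standard normal real random variables, let Γ be a symmetric real M×M matrix and c ∈ ℝ, and set Z = c + Y'ΓY = c + Σ_{k,l=1}^M Γ_{kl} Y_k Y_l. If Var(Z) > 0, then the law of Z has no atoms, i.e., P(Z = x) = 0 for every x ∈ ℝ (equivalently, the cumulative distribution function of Z is continuous). -/
/-!
`Z - x` is the value at `Y` of the polynomial `c - x + ∑ Γₖₗ XₖXₗ`, which is nonzero because `Z`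
is not constant. The law of `Y` is a product of atomless measures, under which the zero set of a
nonzero polynomial is null: expanding in the first variable, every slice off the zero set of the
leading coefficient (null by induction on the number of variables) is a finite set of roots, and
Fubini concludes.
-/

open MeasureTheory ProbabilityTheory

namespace MvPolynomial

theorem ae_eval_ne_zero :
    ∀ {n : ℕ} (μ : Fin n → Measure ℝ) [∀ i, SigmaFinite (μ i)] [∀ i, NullSingletonClass (μ i)]
      {p : MvPolynomial (Fin n) ℝ}, p ≠ 0 → ∀ᵐ x ∂Measure.pi μ, eval x p ≠ 0
  | 0, μ, _, _, p, hp => by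
    rw [p.eq_C_of_isEmpty] at *
    exact .of_forall fun x => by simpa using C_ne_zero.mp hp
  | n + 1, μ, _, _, p, hp => by
    set q : Polynomial (MvPolynomial (Fin n) ℝ) := finSuccEquiv ℝ n p
    have hq : q.leadingCoeff ≠ 0 := by simpa [q] using hp
    have finite_slice (s : Fin n → ℝ) (hs : eval s q.leadingCoeff ≠ 0) :
        {y : ℝ | eval (Fin.cons y s : Fin (n + 1) → ℝ) p = 0}.Finite := by
      have hmap : q.map (eval s) ≠ 0 := fun h => hs <| by
        simpa using congrArg (Polynomial.coeff · q.natDegree) h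
      simpa [eval_eq_eval_mv_eval', q] using Polynomial.finite_setOfPred_isRoot hmap
    have hmeas : MeasurableSet
        {z : ℝ × (Fin n → ℝ) | eval (Fin.cons z.1 z.2 : Fin (n + 1) → ℝ) p ≠ 0} :=
      ((continuous_eval p).comp (continuous_fst.finCons continuous_snd)).measurable
        (measurableSet_singleton 0).compl
    have hprod : ∀ᵐ z ∂(μ 0).prod (Measure.pi fun j => μ (Fin.succAbove 0 j)),
        eval (Fin.cons z.1 z.2 : Fin (n + 1) → ℝ) p ≠ 0 := by
      rw [Measure.ae_prod_iff_ae_ae hmeas, Measure.ae_ae_comm hmeas]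
      filter_upwards [ae_eval_ne_zero _ hq] with s hs
      exact measure_mono_null (fun y hy => by simpa using hy) ((finite_slice s hs).measure_zero _)
    simpa using (measurePreserving_piFinSuccAbove μ 0).quasiMeasurePreserving.ae hprod

end MvPolynomial

theorem ProbabilityTheory.iIndepFun.ae_eval_ne_zero {Ω : Type*} [MeasurableSpace Ω]
    {P : Measure Ω} [IsProbabilityMeasure P] {n : ℕ} {Y : Fin n → Ω → ℝ} (hY : iIndepFun Y P)
    (hYmeas : ∀ k, AEMeasurable (Y k) P) [∀ k, NullSingletonClass (P.map (Y k))]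
    {p : MvPolynomial (Fin n) ℝ} (hp : p ≠ 0) :
    ∀ᵐ ω ∂P, MvPolynomial.eval (fun k => Y k ω) p ≠ 0 := by
  refine ae_of_ae_map (p := fun y => MvPolynomial.eval y p ≠ 0)
    (aemeasurable_pi_lambda _ hYmeas) ?_
  rw [(iIndepFun_iff_map_fun_eq_pi_map hYmeas).mp hY]
  exact MvPolynomial.ae_eval_ne_zero _ hp

theorem gaussian_quadratic_form_no_atoms_general
    {Ω : Type*} [MeasureSpace Ω] [IsProbabilityMeasure (ℙ : Measure Ω)]
    (M : ℕ) (Y : Fin M → Ω → ℝ) (hYmeas : ∀ k, Measurable (Y k))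
    (hYindep : iIndepFun Y ℙ)
    (hYdist : ∀ k, Measure.map (Y k) ℙ = gaussianReal 0 1)
    (Γ : Matrix (Fin M) (Fin M) ℝ) (c : ℝ)
    (Z : Ω → ℝ) (hZ : ∀ ω, Z ω = c + ∑ k, ∑ l, Γ k l * Y k ω * Y l ω)
    (hvar : 0 < variance Z ℙ) :
    ∀ x : ℝ, ℙ {ω | Z ω = x} = 0 := by
  intro x
  have (k : Fin M) : NullSingletonClass (Measure.map (Y k) ℙ) :=
    hYdist k ▸ nullSingletonClass_gaussianReal one_ne_zero
  set p : MvPolynomial (Fin M) ℝ := MvPolynomial.C (c - x) +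
    ∑ k, ∑ l, MvPolynomial.C (Γ k l) * MvPolynomial.X k * MvPolynomial.X l
  have heval (ω : Ω) : MvPolynomial.eval (fun k => Y k ω) p = Z ω - x := by
    simp only [p, hZ, map_add, map_sub, MvPolynomial.eval_C, map_sum,
      map_mul, MvPolynomial.eval_X]
    ring
  have hp : p ≠ 0 := by
    intro hp_eq
    have hZx : Z = fun _ => x := funext fun ω => by
      simpa [hp_eq, sub_eq_zero, eq_comm] using heval ω
    simp [hZx, variance_eq_integral aemeasurable_const] at hvar
  have hae := hYindep.ae_eval_ne_zero (fun k => (hYmeas k).aemeasurable) hp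
  simpa [heval, sub_eq_zero] using ae_iff.mp hae

/-- Continuity of the distribution function of Gaussian quadratic forms: if
`Z = c + Y'ΓY` with `Y` a standard Gaussian vector and `Γ` symmetric, and
`Var(Z) > 0`, then the law of `Z` has no atoms. -/
theorem gaussian_quadratic_form_no_atoms
    {Ω : Type*} [MeasureSpace Ω] [IsProbabilityMeasure (ℙ : Measure Ω)]
    (M : ℕ) (Y : Fin M → Ω → ℝ) (hYmeas : ∀ k, Measurable (Y k))
    (hYindep : iIndepFun Y ℙ)
    (hYdist : ∀ k, Measure.map (Y k) ℙ = gaussianReal 0 1)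
    (Γ : Matrix (Fin M) (Fin M) ℝ) (hΓ : Γ.IsSymm) (c : ℝ)
    (Z : Ω → ℝ) (hZ : ∀ ω, Z ω = c + ∑ k, ∑ l, Γ k l * Y k ω * Y l ω)
    (hvar : 0 < variance Z ℙ) :
    ∀ x : ℝ, ℙ {ω | Z ω = x} = 0 :=
  gaussian_quadratic_form_no_atoms_general M Y hYmeas hYindep hYdist Γ c Z hZ hvar
end
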